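/- Define ρ̂_j(α, β) := 2 + 2(j-1)β - 2jα/((1-β)(j-1) + 1) if β ≤ 1 + (1 - √(jα))/(j-1), and ρ̂_j(α, β) := 2(j + 1 - 2√(jα)) otherwise. Then for all j ≥ 2 and all 0 < α, β < 1, ρ̂_j(α, β) ≥ ρ̂_{j-1}(α, β), i.e., the exponent is monotonically nondecreasing in j. -/
import Mathlib


/-- The exponent `ρ̂_j(α, β)` from Theorem 1 of the paper
(for `j = 1` the convention `x/0 = 0` gives `ρ̂₁(α,β) = 2 - 2α`). -/
noncomputable def rhoHat (j : ℕ) (α β : ℝ) : ℝ :=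
  if β ≤ 1 + (1 - Real.sqrt (j * α)) / ((j : ℝ) - 1) then
    2 + 2 * ((j : ℝ) - 1) * β - 2 * j * α / ((1 - β) * ((j : ℝ) - 1) + 1)
  else
    2 * ((j : ℝ) + 1 - 2 * Real.sqrt (j * α))

set_option maxHeartbeats 1000000 in
/-- Lemma prop7*: the exponent `ρ̂_j(α,β)` is monotonically
nondecreasing in `j`. -/
theorem rhoHat_monotone (j : ℕ) (hj : 2 ≤ j) (α β : ℝ)
    (hα0 : 0 < α) (hα1 : α < 1) (hβ0 : 0 < β) (hβ1 : β < 1) :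
    rhoHat (j - 1) α β ≤ rhoHat j α β := by
  have hcast : ((j - 1 : ℕ) : ℝ) = (j : ℝ) - 1 := by
    have h1 : (1:ℕ) ≤ j := by omega
    push_cast [h1]
    ring
  have ht2 : (2:ℝ) ≤ (j:ℝ) := by exact_mod_cast hj
  unfold rhoHat
  rw [hcast]
  set a := Real.sqrt ((j:ℝ) * α) with hadef
  set b := Real.sqrt (((j:ℝ) - 1) * α) with hbdef
  have ha0 : 0 ≤ a := Real.sqrt_nonneg _
  have hb0 : 0 ≤ b := Real.sqrt_nonneg _
  have ha2 : a ^ 2 = (j:ℝ) * α := Real.sq_sqrt (by nlinarith)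
  have hb2 : b ^ 2 = ((j:ℝ) - 1) * α := Real.sq_sqrt (by nlinarith)
  have hbα : α < b := by nlinarith
  have haα : α < a := by nlinarith
  have hL2 : 2 * (a - b) ≤ 1 := by nlinarith
  have hDjpos : 0 < (1 - β) * ((j:ℝ) - 1) + 1 := by nlinarith
  have hDj1 : (1:ℝ) ≤ (1 - β) * ((j:ℝ) - 1) + 1 := by nlinarith
  have hDk1 : (1:ℝ) ≤ (1 - β) * ((j:ℝ) - 1 - 1) + 1 := by nlinarith
  have hDkpos : 0 < (1 - β) * ((j:ℝ) - 1 - 1) + 1 := by linarith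
  -- pointwise inequality f_{j-1}(β) ≤ f_j(β)
  have hfkfj : 2 + 2 * ((j:ℝ) - 1 - 1) * β - 2 * ((j:ℝ) - 1) * α / ((1 - β) * ((j:ℝ) - 1 - 1) + 1)
      ≤ 2 + 2 * ((j:ℝ) - 1) * β - 2 * (j:ℝ) * α / ((1 - β) * ((j:ℝ) - 1) + 1) := by
    have key : 2 * (j:ℝ) * α / ((1 - β) * ((j:ℝ) - 1) + 1)
        - 2 * ((j:ℝ) - 1) * α / ((1 - β) * ((j:ℝ) - 1 - 1) + 1)
        = 2 * α * β / (((1 - β) * ((j:ℝ) - 1) + 1) * ((1 - β) * ((j:ℝ) - 1 - 1) + 1)) := by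
      field_simp
      ring
    have hDD : (1:ℝ) ≤ ((1 - β) * ((j:ℝ) - 1) + 1) * ((1 - β) * ((j:ℝ) - 1 - 1) + 1) := by
      have hA : (0:ℝ) ≤ (1 - β) * ((j:ℝ) - 1) :=
        mul_nonneg (by linarith) (by linarith)
      have hB : (0:ℝ) ≤ (1 - β) * ((j:ℝ) - 1 - 1) :=
        mul_nonneg (by linarith) (by linarith)
      nlinarith [mul_nonneg hA hB, hA, hB]
    have hq : 2 * α * β / (((1 - β) * ((j:ℝ) - 1) + 1) * ((1 - β) * ((j:ℝ) - 1 - 1) + 1))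
        ≤ 2 * β := by
      rw [div_le_iff₀ (by positivity)]
      nlinarith [mul_nonneg hβ0.le
        (show (0:ℝ) ≤ ((1 - β) * ((j:ℝ) - 1) + 1) * ((1 - β) * ((j:ℝ) - 1 - 1) + 1) - α by
          linarith)]
    linarith
  -- f_j(β) ≤ g_j for all β
  have hfg : 2 + 2 * ((j:ℝ) - 1) * β - 2 * (j:ℝ) * α / ((1 - β) * ((j:ℝ) - 1) + 1)
      ≤ 2 * ((j:ℝ) + 1 - 2 * a) := by
    have h2 : 2 + 2 * ((j:ℝ) - 1) * β - 2 * ((j:ℝ) + 1 - 2 * a)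
        ≤ 2 * (j:ℝ) * α / ((1 - β) * ((j:ℝ) - 1) + 1) := by
      rw [le_div_iff₀ hDjpos]
      linarith [sq_nonneg ((1 - β) * ((j:ℝ) - 1) + 1 - a), ha2]
    linarith
  split_ifs with hk hjc hjc
  · exact hfkfj
  · exact le_trans hfkfj hfg
  · -- ¬cond_{j-1}, cond_j
    by_cases hj2 : j = 2
    · exfalso
      apply hk
      subst hj2
      have e : ((2:ℕ):ℝ) - 1 - 1 = 0 := by norm_num
      rw [e, div_zero]
      linarith
    · have hj3 : (3:ℝ) ≤ (j:ℝ) := by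
        have h3 : 3 ≤ j := by omega
        exact_mod_cast h3
      push_neg at hk
      have ht20 : (0:ℝ) < (j:ℝ) - 1 - 1 := by linarith
      have hDkb : (1 - β) * ((j:ℝ) - 1 - 1) + 1 < b := by
        have h2 : (1 - b) / ((j:ℝ) - 1 - 1) < β - 1 := by linarith
        rw [div_lt_iff₀ ht20] at h2
        nlinarith
      have hb1 : 1 < b := by linarith
      have hX : a ≤ (1 - β) * ((j:ℝ) - 1) + 1 := by
        have h2 : β - 1 ≤ (1 - a) / ((j:ℝ) - 1) := by linarith
        rw [le_div_iff₀ (by linarith : (0:ℝ) < (j:ℝ) - 1)] at h2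
        nlinarith
      have hY : (1 - β) * ((j:ℝ) - 1) + 1 < b + (1 - β) := by nlinarith
      have hXY : 0 < b + (1 - β) - a := by linarith
      have hGa : 0 ≤ a * (1 + 2 * b - 2 * a) := mul_nonneg ha0 (by linarith)
      have hGbc : 0 ≤ (b + (1 - β)) * (1 + b - (1 - β)) - a ^ 2 := by
        nlinarith [mul_pos (by linarith : (0:ℝ) < 1 - β) hβ0]
      have t1 : 0 ≤ (b + (1 - β) - ((1 - β) * ((j:ℝ) - 1) + 1)) * (a * (1 + 2 * b - 2 * a)) :=
        mul_nonneg (by linarith) hGa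
      have t2 : 0 ≤ (((1 - β) * ((j:ℝ) - 1) + 1) - a)
          * ((b + (1 - β)) * (1 + b - (1 - β)) - a ^ 2) :=
        mul_nonneg (by linarith) hGbc
      have t3 : 0 ≤ (((1 - β) * ((j:ℝ) - 1) + 1) - a)
          * (b + (1 - β) - ((1 - β) * ((j:ℝ) - 1) + 1)) * (b + (1 - β) - a) :=
        mul_nonneg (mul_nonneg (by linarith) (by linarith)) hXY.le
      have h6 : (((1 - β) * ((j:ℝ) - 1) + 1) * (1 + 2 * b - ((1 - β) * ((j:ℝ) - 1) + 1)) - a ^ 2)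
            * (b + (1 - β) - a)
          = (b + (1 - β) - ((1 - β) * ((j:ℝ) - 1) + 1)) * (a * (1 + 2 * b - 2 * a))
            + (((1 - β) * ((j:ℝ) - 1) + 1) - a)
              * ((b + (1 - β)) * (1 + b - (1 - β)) - a ^ 2)
            + (((1 - β) * ((j:ℝ) - 1) + 1) - a)
              * (b + (1 - β) - ((1 - β) * ((j:ℝ) - 1) + 1)) * (b + (1 - β) - a) := by
        ring
      have h7' : 0 ≤ (((1 - β) * ((j:ℝ) - 1) + 1) * (1 + 2 * b - ((1 - β) * ((j:ℝ) - 1) + 1))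
          - a ^ 2) * (b + (1 - β) - a) := by
        rw [h6]; linarith
      have h7 : 0 ≤ ((1 - β) * ((j:ℝ) - 1) + 1) * (1 + 2 * b - ((1 - β) * ((j:ℝ) - 1) + 1))
          - a ^ 2 := by
        nlinarith [h7', hXY]
      have h9 : 2 * (j:ℝ) * α / ((1 - β) * ((j:ℝ) - 1) + 1)
          ≤ 2 + 2 * ((j:ℝ) - 1) * β - 2 * ((j:ℝ) - 1 + 1 - 2 * b) := by
        rw [div_le_iff₀ hDjpos]
        nlinarith [h7, ha2]
      linarith
  · -- both else
    linarith
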